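/- Let R be a commutative ring and M ≥ 1. For any share vectors u, v, w and any valid Beaver triples T₁, T₂, T₃, T₄, the reconstruction of MUL(MUL(u, v; T₁), w; T₂) equals (Σu)·(Σv)·(Σw), and it equals the reconstruction of MUL(u, MUL(v, w; T₃); T₄). In particular, secret-shared multiplication satisfies the associative law at the level of reconstructed values. -/
import Mathlib


/-- Reconstruction of a share vector: the sum of its entries. -/
def recon {R : Type*} [CommRing R] {M : ℕ} (u : Fin M → R) : R :=
  ∑ m, u m

/-- Beaver multiplication of share vectors `u` and `v` using the triple `(α, β, γ)`. -/
def beaverMul {R : Type*} [CommRing R] {M : ℕ} [NeZero M]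
    (u v α β γ : Fin M → R) : Fin M → R := fun m =>
  let e : R := ∑ i, (u i - α i)
  let f : R := ∑ i, (v i - β i)
  if m = (0 : Fin M) then e * f + f * α m + e * β m + γ m
  else f * α m + e * β m + γ m

theorem recon_beaverMul {R : Type*} [CommRing R] {M : ℕ} [NeZero M]
    (u v α β γ : Fin M → R) (hT : recon γ = recon α * recon β) :
    recon (beaverMul u v α β γ) = recon u * recon v := by
  unfold recon beaverMul
  simp only
  have h : ∀ m : Fin M,
      (if m = (0 : Fin M) then
        (∑ i, (u i - α i)) * (∑ i, (v i - β i)) + (∑ i, (v i - β i)) * α m +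
          (∑ i, (u i - α i)) * β m + γ m
       else (∑ i, (v i - β i)) * α m + (∑ i, (u i - α i)) * β m + γ m) =
      ((∑ i, (v i - β i)) * α m + (∑ i, (u i - α i)) * β m + γ m) +
        (if m = (0 : Fin M) then (∑ i, (u i - α i)) * (∑ i, (v i - β i)) else 0) := by
    intro m; split <;> ring
  rw [Finset.sum_congr rfl (fun m _ => h m)]
  rw [Finset.sum_add_distrib, Finset.sum_ite_eq' Finset.univ (0 : Fin M)]
  simp only [Finset.mem_univ, if_true, Finset.sum_add_distrib, ← Finset.mul_sum,
    ← Finset.sum_mul, Finset.sum_sub_distrib]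
  unfold recon at hT
  rw [hT]; ring

/-- secret-shared multiplication is associative at the level of
reconstructed values, for any valid Beaver triples. -/
theorem beaverMul_assoc {R : Type*} [CommRing R] {M : ℕ} [NeZero M]
    (u v w : Fin M → R)
    (α₁ β₁ γ₁ α₂ β₂ γ₂ α₃ β₃ γ₃ α₄ β₄ γ₄ : Fin M → R)
    (hT₁ : recon γ₁ = recon α₁ * recon β₁)
    (hT₂ : recon γ₂ = recon α₂ * recon β₂)
    (hT₃ : recon γ₃ = recon α₃ * recon β₃)
    (hT₄ : recon γ₄ = recon α₄ * recon β₄) :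
    recon (beaverMul (beaverMul u v α₁ β₁ γ₁) w α₂ β₂ γ₂) =
      recon u * recon v * recon w ∧
    recon (beaverMul (beaverMul u v α₁ β₁ γ₁) w α₂ β₂ γ₂) =
      recon (beaverMul u (beaverMul v w α₃ β₃ γ₃) α₄ β₄ γ₄) := by
  rw [recon_beaverMul _ _ _ _ _ hT₂, recon_beaverMul _ _ _ _ _ hT₁,
    recon_beaverMul _ _ _ _ _ hT₄, recon_beaverMul _ _ _ _ _ hT₃]
  exact ⟨rfl, by ring⟩
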